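/- Let a, x ∈ ℝⁿ have all components nonnegative, and let V_{±π(a)} denote the convex hull of the set {(ε_1 a_{π(1)}, …, ε_n a_{π(n)}) : π ∈ S_n, ε ∈ {−1, +1}ⁿ} of all signed coordinate permutations of a. Then x ∈ V_{±π(a)} if and only if x is weakly majorized by a, i.e. for every l ∈ {1, …, n} the sum of the l largest components of x is at most the sum of the l largest components of a. -/

import Mathlib

open Finset

/-- The sum of the `l` largest components of `x : Fin n → ℝ`, defined as the
supremum of sums over index sets of cardinality `l`. -/
noncomputable def sumLargest {n : ℕ} (x : Fin n → ℝ) (l : ℕ) : ℝ :=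
  sSup ((fun A : Finset (Fin n) => ∑ i ∈ A, x i) '' {A | A.card = l})

/-- `x` is weakly majorized by `a`: for every `1 ≤ l ≤ n` the sum of the `l`
largest components of `x` is at most that of `a`. -/
def WeaklyMajorizes {n : ℕ} (x a : Fin n → ℝ) : Prop :=
  ∀ l, 1 ≤ l → l ≤ n → sumLargest x l ≤ sumLargest a l

/-- The set of all signed coordinate permutations of `a`. -/
def signPermSet {n : ℕ} (a : Fin n → ℝ) : Set (Fin n → ℝ) :=
  {y | ∃ (π : Equiv.Perm (Fin n)) (ε : Fin n → ℝ),
    (∀ i, ε i = 1 ∨ ε i = -1) ∧ y = fun i => ε i * a (π i)}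

/-! Every signed permutation `y` of `a ≥ 0` satisfies the linear inequalities
`∑ i ∈ A, y i ≤ sumLargest a #A`, so every point of the hull does. Conversely, if `x` lies outside
the hull, separate it by a functional `z ↦ ∑ cᵢ zᵢ`. Since `x ≥ 0`, its value at `x` is at most
`∑ |cᵢ| xᵢ`; after sorting `|c|` decreasingly, Abel summation bounds this by a combination of
partial sums of `x` with nonnegative weights, hence (by weak majorization) by the same combination
of partial sums of the sorted `a`, i.e. by `∑ |cᵢ| a (π i)` for a suitable `π`. That is the value of
the functional at the signed permutation `i ↦ sign cᵢ * a (π i)`, a contradiction. -/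

theorem Finset.sum_le_sum_Iic_of_antitone {ι M : Type*} [LinearOrder ι] [LocallyFiniteOrderBot ι]
    [AddCommMonoid M] [PartialOrder M] [IsOrderedAddMonoid M] {g : ι → M} (hg : Antitone g)
    {s : Finset ι} {i : ι} (hs : #s = #(Iic i)) :
    ∑ j ∈ s, g j ≤ ∑ j ∈ Iic i, g j := by
  have hout : ∑ j ∈ s \ Iic i, g j ≤ #(s \ Iic i) • g i :=
    sum_le_card_nsmul _ _ _ fun j hj => hg (not_le.1 (by simpa using (mem_sdiff.1 hj).2)).le
  have hin : #(Iic i \ s) • g i ≤ ∑ j ∈ Iic i \ s, g j :=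
    card_nsmul_le_sum _ _ _ fun j hj => hg (mem_Iic.1 (mem_sdiff.1 hj).1)
  rw [card_sdiff_comm hs] at hout
  rw [← sum_inter_add_sum_sdiff s (Iic i), ← sum_inter_add_sum_sdiff (Iic i) s, inter_comm]
  exact add_le_add_right (hout.trans hin) _

theorem Fin.sum_mul_le_sum_mul_of_sum_Iic_le {R : Type*} [CommRing R] [PartialOrder R]
    [IsOrderedRing R] : ∀ {n : ℕ} {β u v : Fin n → R}, Antitone β → (∀ i, 0 ≤ β i) →
    (∀ i, ∑ j ∈ Iic i, u j ≤ ∑ j ∈ Iic i, v j) → ∑ i, β i * u i ≤ ∑ i, β i * v i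
  | 0, _, _, _, _, _, _ => by simp
  | n + 1, β, u, v, hβ, hβ0, huv => by
    have split (w : Fin (n + 1) → R) : ∑ i, β i * w i =
        ∑ i : Fin n, (β i.castSucc - β (last n)) * w i.castSucc + β (last n) * ∑ i, w i := by
      simp only [Fin.sum_univ_castSucc, sub_mul, sum_sub_distrib, mul_add, mul_sum]
      ring
    have hinit := Fin.sum_mul_le_sum_mul_of_sum_Iic_le (β := fun i => β i.castSucc - β (last n))
      (u := u ∘ castSucc) (v := v ∘ castSucc)
      (fun i j hij => sub_le_sub_right (hβ (castSucc_le_castSucc_iff.2 hij)) _)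
      (fun i => sub_nonneg.2 (hβ (le_last _)))
      (fun i => by simpa [← map_castSuccEmb_Iic] using huv i.castSucc)
    have htotal : ∑ i, u i ≤ ∑ i, v i := by simpa [Iic_top] using huv ⊤
    rw [split u, split v]
    exact add_le_add hinit (mul_le_mul_of_nonneg_left htotal (hβ0 _))

section SignPermPolytope

variable {n : ℕ}

theorem le_sumLargest (x : Fin n → ℝ) (A : Finset (Fin n)) : ∑ i ∈ A, x i ≤ sumLargest x #A :=
  le_csSup (Set.toFinite _).bddAbove ⟨A, rfl, rfl⟩

theorem sumLargest_le {x : Fin n → ℝ} {l : ℕ} {C : ℝ} (hl : l ≤ n)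
    (h : ∀ A : Finset (Fin n), #A = l → ∑ i ∈ A, x i ≤ C) : sumLargest x l ≤ C := by
  obtain ⟨A, -, hA⟩ := exists_subset_card_eq (show l ≤ #(univ : Finset (Fin n)) by simpa using hl)
  refine csSup_le ⟨_, A, hA, rfl⟩ ?_
  rintro _ ⟨B, hB, rfl⟩
  exact h B hB

theorem sumLargest_comp_perm (x : Fin n → ℝ) (σ : Equiv.Perm (Fin n)) (l : ℕ) :
    sumLargest (x ∘ σ) l = sumLargest x l := by
  unfold sumLargest
  congr 1
  ext r
  constructor
  · rintro ⟨A, hA, rfl⟩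
    exact ⟨A.map σ.toEmbedding, by simpa using hA, by simp⟩
  · rintro ⟨A, hA, rfl⟩
    exact ⟨A.map σ.symm.toEmbedding, by simpa using hA, by simp⟩

theorem sumLargest_eq_sum_Iic_of_antitone {g : Fin n → ℝ} (hg : Antitone g) (i : Fin n) :
    sumLargest g (i + 1) = ∑ j ∈ Iic i, g j :=
  le_antisymm
    (sumLargest_le i.isLt fun _ hA => sum_le_sum_Iic_of_antitone hg (by rw [hA, Fin.card_Iic]))
    (by simpa using le_sumLargest g (Iic i))

theorem exists_perm_antitone_comp (b : Fin n → ℝ) :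
    ∃ σ : Equiv.Perm (Fin n), Antitone (b ∘ σ) :=
  ⟨Tuple.sort (OrderDual.toDual ∘ b), Tuple.monotone_sort (OrderDual.toDual ∘ b)⟩

theorem WeaklyMajorizes.exists_perm_sum_mul_le {x a : Fin n → ℝ} (h : WeaklyMajorizes x a)
    {b : Fin n → ℝ} (hb : ∀ i, 0 ≤ b i) :
    ∃ π : Equiv.Perm (Fin n), ∑ i, b i * x i ≤ ∑ i, b i * a (π i) := by
  obtain ⟨σ, hσ⟩ := exists_perm_antitone_comp b
  obtain ⟨τ, hτ⟩ := exists_perm_antitone_comp a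
  have hpartial (i : Fin n) : ∑ j ∈ Iic i, x (σ j) ≤ ∑ j ∈ Iic i, a (τ j) := calc
    ∑ j ∈ Iic i, x (σ j) ≤ sumLargest (x ∘ σ) (i + 1) := by
      simpa using le_sumLargest (x ∘ σ) (Iic i)
    _ = sumLargest x (i + 1) := sumLargest_comp_perm x σ _
    _ ≤ sumLargest a (i + 1) := h _ (by omega) i.isLt
    _ = sumLargest (a ∘ τ) (i + 1) := (sumLargest_comp_perm a τ _).symm
    _ = ∑ j ∈ Iic i, a (τ j) := sumLargest_eq_sum_Iic_of_antitone hτ i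
  refine ⟨τ * σ⁻¹, ?_⟩
  calc ∑ i, b i * x i = ∑ k, b (σ k) * x (σ k) := (Equiv.sum_comp σ _).symm
    _ ≤ ∑ k, b (σ k) * a (τ k) :=
      Fin.sum_mul_le_sum_mul_of_sum_Iic_le hσ (fun _ => hb _) hpartial
    _ = ∑ i, b i * a ((τ * σ⁻¹) i) := by
      rw [← Equiv.sum_comp σ fun i => b i * a ((τ * σ⁻¹) i)]
      simp

theorem finite_signPermSet (a : Fin n → ℝ) : (signPermSet a).Finite := by
  refine (Set.Finite.pi (t := fun _ => Set.range a ∪ Set.range (-a))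
    fun _ => (Set.finite_range a).union (Set.finite_range _)).subset ?_
  rintro _ ⟨π, ε, hε, rfl⟩ i -
  rcases hε i with h | h <;> simp [h]

theorem sum_le_sumLargest_of_mem_convexHull_signPermSet {a x : Fin n → ℝ} (ha : ∀ i, 0 ≤ a i)
    (hx : x ∈ convexHull ℝ (signPermSet a)) (A : Finset (Fin n)) :
    ∑ i ∈ A, x i ≤ sumLargest a #A := by
  refine convexHull_min (t := {z | ∑ i ∈ A, z i ≤ sumLargest a #A}) ?_
    (convex_halfSpace_le ⟨fun u v => by simp [sum_add_distrib], fun c u => by simp [mul_sum]⟩ _) hx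
  rintro _ ⟨π, ε, hε, rfl⟩
  calc ∑ i ∈ A, ε i * a (π i) ≤ ∑ i ∈ A, a (π i) := sum_le_sum fun i _ => by
        rcases hε i with h | h <;> simp only [h, one_mul, neg_one_mul] <;> linarith [ha (π i)]
    _ = ∑ i ∈ A.map π.toEmbedding, a i := by simp
    _ ≤ sumLargest a #A := by simpa using le_sumLargest a (A.map π.toEmbedding)

theorem mem_convexHull_signPermSet_of_weaklyMajorizes {a x : Fin n → ℝ}
    (hx : ∀ i, 0 ≤ x i) (h : WeaklyMajorizes x a) : x ∈ convexHull ℝ (signPermSet a) := by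
  by_contra hmem
  obtain ⟨f, u, hf, hfx⟩ := geometric_hahn_banach_closed_point (convex_convexHull ℝ _)
    ((finite_signPermSet a).isClosed_convexHull ℝ) hmem
  set c : Fin n → ℝ := fun i => f (Pi.single i 1)
  have hf_apply (z : Fin n → ℝ) : f z = ∑ i, c i * z i := by
    conv_lhs => rw [← univ_sum_single z]
    refine (map_sum f _ _).trans (sum_congr rfl fun i _ => ?_)
    rw [mul_comm, ← smul_eq_mul, ← map_smul, ← Pi.single_smul, smul_eq_mul, mul_one]
  obtain ⟨π, hπ⟩ := h.exists_perm_sum_mul_le (b := fun i => |c i|) fun i => abs_nonneg _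
  set ε : Fin n → ℝ := fun i => if 0 ≤ c i then 1 else -1
  have hεc (i : Fin n) : c i * ε i = |c i| := by
    by_cases hc : 0 ≤ c i
    · simp [ε, hc, abs_of_nonneg hc]
    · simp [ε, hc, abs_of_neg (not_le.1 hc)]
  have hy : (fun i => ε i * a (π i)) ∈ signPermSet a :=
    ⟨π, ε, fun i => by by_cases hc : 0 ≤ c i <;> simp [ε, hc], rfl⟩
  have : f x ≤ f fun i => ε i * a (π i) := calc
    f x = ∑ i, c i * x i := hf_apply x
    _ ≤ ∑ i, |c i| * x i := sum_le_sum fun i _ => mul_le_mul_of_nonneg_right (le_abs_self _) (hx i)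
    _ ≤ ∑ i, |c i| * a (π i) := hπ
    _ = f fun i => ε i * a (π i) := by simp only [hf_apply, ← hεc, mul_assoc]
  linarith [hf _ (subset_convexHull ℝ _ hy)]

end SignPermPolytope

/-- For `a, x` with nonnegative components, `x` lies in the sign permutation polytope
of `a` if and only if `x` is weakly majorized by `a`. -/
theorem mem_signPermPolytope_iff_weaklyMajorizes (n : ℕ) (a x : Fin n → ℝ)
    (ha : ∀ i, 0 ≤ a i) (hx : ∀ i, 0 ≤ x i) :
    x ∈ convexHull ℝ (signPermSet a) ↔ WeaklyMajorizes x a :=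
  ⟨fun hmem _ _ hl => sumLargest_le hl fun A hA =>
      hA ▸ sum_le_sumLargest_of_mem_convexHull_signPermSet ha hmem A,
    mem_convexHull_signPermSet_of_weaklyMajorizes hx⟩
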